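/- arXiv:2306.10554 — 2 statements merged into one kernel-verified Lean document; each statement's English description precedes it below -/
import Mathlib

section
/- For every x ∈ ℝⁿ and every index i ∈ {1,…,n}, the sum over configurations with θ_i = 1 can be rewritten as a weighted sum over configurations with θ_i = 0: ∑_{θ∈{0,1}ⁿ, θ_i=1} v_i(θ) f(x,θ) = exp(-((k²/2)·t_{i,i} - k·∑_{j=1}^{n} t_{j,i} x_j)) · ∑_{θ∈{0,1}ⁿ, θ_i=0} v_i(θ) f(x,θ) · exp(-k² · ∑_{j≠i} θ_j t_{j,i}). -/
open Real MeasureTheory Matrix Finset BigOperators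

noncomputable section

/-- The real vector in `{0,1}ⁿ ⊆ ℝⁿ` associated to a binary configuration. -/
def bvec {n : ℕ} (θ : Fin n → Bool) : Fin n → ℝ := fun j => if θ j then 1 else 0

/-- The density of the `N_n(k·θ, Σ)` distribution at `x`. -/
def gdens (n : ℕ) (k : ℝ) (S : Matrix (Fin n) (Fin n) ℝ) (x θv : Fin n → ℝ) : ℝ :=
  (2 * π) ^ (-(n : ℝ) / 2) * S.det ^ (-(1 : ℝ) / 2) *
    Real.exp (-(1 / 2) * ((x - k • θv) ⬝ᵥ (S⁻¹ *ᵥ (x - k • θv))))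

/-- The i.i.d. Bernoulli(p) weight `∏ j, p^(θ j) (1-p)^(1 - θ j)` of a configuration `θ`. -/
def wBer (n : ℕ) (p : ℝ) (θ : Fin n → Bool) : ℝ :=
  ∏ j, (if θ j then p else 1 - p)

/-- The weight `v_i(θ) = ∏_{j ≠ i} p^(θ_j) (1-p)^(1-θ_j)`. -/
def vBer (n : ℕ) (p : ℝ) (i : Fin n) (θ : Fin n → Bool) : ℝ :=
  ∏ j ∈ Finset.univ.erase i, (if θ j then p else 1 - p)

/-! Setting `θ_i = 1` shifts the mean `kθ` by `k eᵢ`. Expanding the quadratic form of the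
symmetric matrix `Σ⁻¹` around `x - kθ`, the shift multiplies the density by
`exp (-(k²/2) t_{i,i} + k ∑_j t_{j,i} (x_j - kθ_j))`, while `v_i` does not see `θ_i`. -/

namespace Matrix

variable {ι R : Type*} [Fintype ι] [DecidableEq ι] [CommRing R]

omit [DecidableEq ι] in
theorem IsSymm.dotProduct_mulVec_comm {A : Matrix ι ι R} (hA : A.IsSymm) (v w : ι → R) :
    v ⬝ᵥ (A *ᵥ w) = w ⬝ᵥ (A *ᵥ v) := by
  rw [dotProduct_mulVec, ← mulVec_transpose, hA.eq, dotProduct_comm]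

theorem IsSymm.dotProduct_mulVec_sub_smul_single {A : Matrix ι ι R} (hA : A.IsSymm)
    (y : ι → R) (c : R) (i : ι) :
    (y - c • Pi.single i 1) ⬝ᵥ (A *ᵥ (y - c • Pi.single i 1)) =
      y ⬝ᵥ (A *ᵥ y) - 2 * c * ∑ j, A j i * y j + c ^ 2 * A i i := by
  have hcol : y ⬝ᵥ A.col i = ∑ j, A j i * y j := by
    simp only [dotProduct, col_apply, mul_comm]
  simp only [mulVec_sub, mulVec_smul, sub_dotProduct, dotProduct_sub, smul_dotProduct,
    dotProduct_smul, hA.dotProduct_mulVec_comm (Pi.single i 1) y, hcol, single_one_dotProduct,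
    mulVec_single_one, col_apply, smul_eq_mul]
  ring

end Matrix

theorem Finset.sum_filter_eval_eq_sum_update {ι β M : Type*} [Fintype ι] [DecidableEq ι]
    [Fintype β] [DecidableEq β] [AddCommMonoid M] (g : (ι → β) → M) (i : ι) (a b : β) :
    ∑ θ ∈ univ.filter (fun θ : ι → β => θ i = a), g θ =
      ∑ θ ∈ univ.filter (fun θ : ι → β => θ i = b), g (Function.update θ i a) := by
  refine sum_nbij' (Function.update · i b) (Function.update · i a) ?_ ?_ ?_ ?_ ?_
  all_goals intro θ hθ; simp [← (mem_filter.mp hθ).2]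

theorem vBer_update_self {n : ℕ} (p : ℝ) (i : Fin n) (θ : Fin n → Bool) (b : Bool) :
    vBer n p i (Function.update θ i b) = vBer n p i θ :=
  prod_congr rfl fun j hj => by rw [Function.update_of_ne (ne_of_mem_erase hj)]

theorem bvec_update_true {n : ℕ} {θ : Fin n → Bool} {i : Fin n} (hθ : θ i = false) :
    bvec (Function.update θ i true) = bvec θ + Pi.single i 1 := by
  funext j
  rcases eq_or_ne j i with rfl | hji
  · simp [bvec, hθ]
  · simp [bvec, hji]

theorem gdens_add_single {n : ℕ} (k : ℝ) {S : Matrix (Fin n) (Fin n) ℝ} (hS : S⁻¹.IsSymm)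
    (x v : Fin n → ℝ) (i : Fin n) :
    gdens n k S x (v + Pi.single i 1) =
      exp (-(k ^ 2 / 2 * S⁻¹ i i - k * ∑ j, S⁻¹ j i * x j)) *
        (gdens n k S x v * exp (-k ^ 2 * ∑ j, v j * S⁻¹ j i)) := by
  have hshift : x - k • (v + Pi.single i 1) = (x - k • v) - k • Pi.single i 1 := by
    rw [smul_add]; abel
  have hcross : ∑ j, S⁻¹ j i * (x - k • v) j =
      ∑ j, S⁻¹ j i * x j - k * ∑ j, v j * S⁻¹ j i := by
    simp only [Pi.sub_apply, Pi.smul_apply, smul_eq_mul, mul_sum, ← sum_sub_distrib]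
    exact sum_congr rfl fun j _ => by ring
  unfold gdens
  rw [hshift, hS.dotProduct_mulVec_sub_smul_single, hcross]
  set Q := (x - k • v) ⬝ᵥ (S⁻¹ *ᵥ (x - k • v))
  rw [show -(1 / 2) * (Q - 2 * k * (∑ j, S⁻¹ j i * x j - k * ∑ j, v j * S⁻¹ j i) +
      k ^ 2 * S⁻¹ i i) = -(k ^ 2 / 2 * S⁻¹ i i - k * ∑ j, S⁻¹ j i * x j) +
      (-(1 / 2) * Q + -k ^ 2 * ∑ j, v j * S⁻¹ j i) by ring, exp_add, exp_add]
  ring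

theorem sum_theta_one_eq_general {n : ℕ} (k p : ℝ)
    (S : Matrix (Fin n) (Fin n) ℝ) (hS : S.PosDef)
    (x : Fin n → ℝ) (i : Fin n) :
    ∑ θ ∈ Finset.univ.filter (fun θ : Fin n → Bool => θ i = true),
        vBer n p i θ * gdens n k S x (bvec θ) =
      Real.exp (-(k ^ 2 / 2 * S⁻¹ i i - k * ∑ j, S⁻¹ j i * x j)) *
        ∑ θ ∈ Finset.univ.filter (fun θ : Fin n → Bool => θ i = false),
          vBer n p i θ * gdens n k S x (bvec θ) *
            Real.exp (-k ^ 2 * ∑ j ∈ Finset.univ.erase i, bvec θ j * S⁻¹ j i) := by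
  have hsymm : S⁻¹.IsSymm := isHermitian_iff_isSymm.mp hS.isHermitian.inv
  rw [sum_filter_eval_eq_sum_update _ i true false, mul_sum]
  refine sum_congr rfl fun θ hθ => ?_
  have hθi : θ i = false := (mem_filter.mp hθ).2
  rw [vBer_update_self, bvec_update_true hθi, gdens_add_single k hsymm,
    sum_erase _ (by simp [bvec, hθi])]
  ring

/-- The sum over configurations with `θ_i = 1` rewritten as a weighted sum over
configurations with `θ_i = 0`. Here `S⁻¹ j i = t_{j,i}`. -/
theorem sum_theta_one_eq {n : ℕ} (hn : 1 ≤ n) (k p : ℝ) (hk : k ≠ 0)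
    (hp0 : 0 < p) (hp1 : p < 1)
    (S : Matrix (Fin n) (Fin n) ℝ) (hS : S.PosDef)
    (x : Fin n → ℝ) (i : Fin n) :
    ∑ θ ∈ Finset.univ.filter (fun θ : Fin n → Bool => θ i = true),
        vBer n p i θ * gdens n k S x (bvec θ) =
      Real.exp (-(k ^ 2 / 2 * S⁻¹ i i - k * ∑ j, S⁻¹ j i * x j)) *
        ∑ θ ∈ Finset.univ.filter (fun θ : Fin n → Bool => θ i = false),
          vBer n p i θ * gdens n k S x (bvec θ) *
            Real.exp (-k ^ 2 * ∑ j ∈ Finset.univ.erase i, bvec θ j * S⁻¹ j i) :=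
  sum_theta_one_eq_general k p S hS x i
end
end

section
/- Under the joint model in which θ = (θ_1,…,θ_n) are i.i.d. Bernoulli(p) and, conditionally on θ, X ~ N_n(kθ, Σ): fix 0 < α < 1, let T_{OR,(1)}(X) ≤ ⋯ ≤ T_{OR,(n)}(X) denote the increasingly ordered values of T_{OR,1}(X),…,T_{OR,n}(X), and let k(X) = max{ l ∈ {1,…,n} : (1/l)·∑_{i=1}^{l} T_{OR,(i)}(X) ≤ α } (with k(X) = 0 when this set is empty). Consider the oracle procedure that rejects exactly the hypotheses attaining the k(X) smallest values of T_{OR,i}(X). If the expected number of rejections is positive, then this procedure controls the mFDR at level α: E[number of rejected hypotheses i with θ_i = 0] / E[number of rejected hypotheses] ≤ α. -/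
open Real MeasureTheory Matrix Finset BigOperators

noncomputable section

/-- The joint law of `(θ, X)` on `{0,1}ⁿ × ℝⁿ`, with density `w(θ) f(x, θ)` with respect to
counting measure times Lebesgue measure: `θ` is i.i.d. Bernoulli(p) and `X | θ ~ N_n(kθ, Σ)`. -/
def jointMeasure (n : ℕ) (k p : ℝ) (S : Matrix (Fin n) (Fin n) ℝ) :
    Measure ((Fin n → Bool) × (Fin n → ℝ)) :=
  (Measure.count.prod volume).withDensity
    (fun z => ENNReal.ofReal (wBer n p z.1 * gdens n k S z.2 (bvec z.1)))

/-- The oracle statistic `T_{OR,i}(x) = P(θ_i = 0 | X = x)`. -/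
def TOR (n : ℕ) (k p : ℝ) (S : Matrix (Fin n) (Fin n) ℝ) (i : Fin n) (x : Fin n → ℝ) : ℝ :=
  (∑ η ∈ Finset.univ.filter (fun η : Fin n → Bool => η i = false),
      wBer n p η * gdens n k S x (bvec η)) /
    (∑ η : Fin n → Bool, wBer n p η * gdens n k S x (bvec η))

/-- The permutation sorting the oracle statistics `T_{OR,1}(x), …, T_{OR,n}(x)` increasingly:
the `l`-th order statistic is `T_{OR, sortPerm x l}(x)`. -/
def sortPerm (n : ℕ) (k p : ℝ) (S : Matrix (Fin n) (Fin n) ℝ) (x : Fin n → ℝ) :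
    Equiv.Perm (Fin n) :=
  Tuple.sort (fun i => TOR n k p S i x)

/-- The data-dependent number of rejections
`k(x) = max { l ∈ {1,…,n} : (1/l) ∑_{i=1}^{l} T_{OR,(i)}(x) ≤ α }` (and `0` when the set is
empty); the running average is over the `l` smallest values of the oracle statistics. -/
def numRej (n : ℕ) (k p : ℝ) (S : Matrix (Fin n) (Fin n) ℝ) (α : ℝ) (x : Fin n → ℝ) : ℕ :=
  sSup {l : ℕ | 1 ≤ l ∧ l ≤ n ∧
    (1 / (l : ℝ)) * ∑ j ∈ Finset.univ.filter (fun j : Fin n => (j : ℕ) < l),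
      TOR n k p S (sortPerm n k p S x j) x ≤ α}

/-- The oracle procedure: reject exactly the hypotheses attaining the `k(x)` smallest values
of `T_{OR,i}(x)`. -/
def oracleRule (n : ℕ) (k p : ℝ) (S : Matrix (Fin n) (Fin n) ℝ) (α : ℝ)
    (x : Fin n → ℝ) : Fin n → Bool :=
  fun i => decide ((((sortPerm n k p S x).symm i : Fin n) : ℕ) < numRej n k p S α x)


/-!
Since `T_{OR,i}(X) = P(θ_i = 0 | X)`, conditioning on `X` turns the expected number of false
rejections into the expected sum of `T_{OR,i}(X)` over the rejected `i`. These are the `k(X)`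
smallest statistics, whose average is at most `α` by the choice of `k(X)`; so that sum is at most
`α · k(X)`, the number of rejections, and taking expectations gives the bound.
-/

open scoped ENNReal

section FiniteMixture

variable {Θ X : Type*} [MeasurableSpace Θ] [MeasurableSpace X] {ν : Measure X} [SFinite ν]

theorem withDensity_count_prod_eq_sum (h : Θ × X → ℝ≥0∞) :
    (Measure.count.prod ν).withDensity h
      = Measure.sum fun θ => (ν.map (Prod.mk θ)).withDensity h := by
  rw [Measure.count, Measure.prod_sum_left, withDensity_sum]
  simp only [Measure.dirac_prod]

variable [MeasurableSingletonClass Θ] {h : Θ × X → ℝ} (hh : Measurable h) (h0 : 0 ≤ h)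
include hh h0

theorem integrable_density_mul_section {f : Θ × X → ℝ}
    (hf : Integrable f ((Measure.count.prod ν).withDensity fun z => ENNReal.ofReal (h z)))
    (θ : Θ) : Integrable (fun x => h (θ, x) * f (θ, x)) ν := by
  have hθ : Integrable f ((ν.map (Prod.mk θ)).withDensity fun z => ENNReal.ofReal (h z)) :=
    hf.mono_measure <| (Measure.le_sum _ θ).trans_eq (withDensity_count_prod_eq_sum _).symm
  rw [integrable_withDensity_iff_integrable_smul' hh.ennreal_ofReal
      (ae_of_all _ fun _ => ENNReal.ofReal_lt_top),
    (measurableEmbedding_prodMk_left θ).integrable_map_iff] at hθ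
  refine hθ.congr (.of_forall fun x => ?_)
  simp [ENNReal.toReal_ofReal (h0 (θ, x))]

theorem integral_withDensity_count_prod [Fintype Θ] {f : Θ × X → ℝ}
    (hf : Integrable f ((Measure.count.prod ν).withDensity fun z => ENNReal.ofReal (h z))) :
    ∫ z, f z ∂(Measure.count.prod ν).withDensity (fun z => ENNReal.ofReal (h z))
      = ∑ θ, ∫ x, h (θ, x) * f (θ, x) ∂ν := by
  rw [withDensity_count_prod_eq_sum] at hf ⊢
  rw [integral_sum_measure hf, tsum_fintype]
  refine Finset.sum_congr rfl fun θ _ => ?_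
  rw [integral_withDensity_eq_integral_toReal_smul hh.ennreal_ofReal
      (ae_of_all _ fun _ => ENNReal.ofReal_lt_top),
    (measurableEmbedding_prodMk_left θ).integral_map]
  refine integral_congr_ae (.of_forall fun x => ?_)
  simp [ENNReal.toReal_ofReal (h0 (θ, x))]

theorem integral_withDensity_count_prod_mono [Fintype Θ] {f g : Θ × X → ℝ}
    (hf : Integrable f ((Measure.count.prod ν).withDensity fun z => ENNReal.ofReal (h z)))
    (hg : Integrable g ((Measure.count.prod ν).withDensity fun z => ENNReal.ofReal (h z)))
    (hfg : ∀ x, ∑ θ, h (θ, x) * f (θ, x) ≤ ∑ θ, h (θ, x) * g (θ, x)) :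
    ∫ z, f z ∂(Measure.count.prod ν).withDensity (fun z => ENNReal.ofReal (h z))
      ≤ ∫ z, g z ∂(Measure.count.prod ν).withDensity (fun z => ENNReal.ofReal (h z)) := by
  have hfθ := integrable_density_mul_section hh h0 hf
  have hgθ := integrable_density_mul_section hh h0 hg
  rw [integral_withDensity_count_prod hh h0 hf, integral_withDensity_count_prod hh h0 hg,
    ← integral_finsetSum _ fun θ _ => hfθ θ, ← integral_finsetSum _ fun θ _ => hgθ θ]
  exact integral_mono (integrable_finsetSum _ fun θ _ => hfθ θ)
    (integrable_finsetSum _ fun θ _ => hgθ θ) hfg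

end FiniteMixture

section Model

variable {n : ℕ} {k p : ℝ} {S : Matrix (Fin n) (Fin n) ℝ}

theorem continuous_gdens (θv : Fin n → ℝ) : Continuous fun x => gdens n k S x θv := by
  unfold gdens
  simp only [dotProduct, Matrix.mulVec]
  fun_prop

theorem gdens_pos (hS : 0 < S.det) (x θv : Fin n → ℝ) : 0 < gdens n k S x θv := by
  unfold gdens
  positivity

theorem wBer_pos (hp0 : 0 < p) (hp1 : p < 1) (θ : Fin n → Bool) : 0 < wBer n p θ :=
  Finset.prod_pos fun j _ => by cases θ j <;> simp [hp0, hp1]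

theorem measurable_jointDensity :
    Measurable fun z : (Fin n → Bool) × (Fin n → ℝ) =>
      wBer n p z.1 * gdens n k S z.2 (bvec z.1) :=
  (measurable_from_prod_countable_left
    (f := fun w : (Fin n → ℝ) × (Fin n → Bool) => wBer n p w.2 * gdens n k S w.1 (bvec w.2))
    fun θ => (continuous_gdens (bvec θ)).measurable.const_mul (wBer n p θ)).comp measurable_swap

theorem sum_mul_ite_eq_TOR_mul {x : Fin n → ℝ}
    (hden : ∑ η, wBer n p η * gdens n k S x (bvec η) ≠ 0) (i : Fin n) :
    ∑ θ, wBer n p θ * gdens n k S x (bvec θ) * (if θ i = false then (1 : ℝ) else 0)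
      = TOR n k p S i x * ∑ η, wBer n p η * gdens n k S x (bvec η) := by
  simp only [mul_ite, mul_one, mul_zero]
  rw [← Finset.sum_filter, TOR, div_mul_cancel₀ _ hden]

end Model

section StepUp

theorem numRej_eq_zero_or_mem (n : ℕ) (k p : ℝ) (S : Matrix (Fin n) (Fin n) ℝ) (α : ℝ)
    (x : Fin n → ℝ) :
    numRej n k p S α x = 0 ∨ numRej n k p S α x ∈ {l : ℕ | 1 ≤ l ∧ l ≤ n ∧
      (1 / (l : ℝ)) * ∑ j ∈ Finset.univ.filter (fun j : Fin n => (j : ℕ) < l),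
        TOR n k p S (sortPerm n k p S x j) x ≤ α} := by
  rw [numRej]
  rcases Set.eq_empty_or_nonempty {l : ℕ | 1 ≤ l ∧ l ≤ n ∧
    (1 / (l : ℝ)) * ∑ j ∈ Finset.univ.filter (fun j : Fin n => (j : ℕ) < l),
      TOR n k p S (sortPerm n k p S x j) x ≤ α} with h | h
  · left; rw [h, csSup_empty]; rfl
  · exact Or.inr (Nat.sSup_mem h ⟨n, fun l hl => hl.2.1⟩)

variable {n : ℕ} {k p : ℝ} {S : Matrix (Fin n) (Fin n) ℝ} {α : ℝ} {x : Fin n → ℝ}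

theorem numRej_le : numRej n k p S α x ≤ n := by
  rcases numRej_eq_zero_or_mem n k p S α x with h | h
  · omega
  · exact h.2.1

theorem sum_oracleRule_mul (g : Fin n → ℝ) :
    ∑ i, (if oracleRule n k p S α x i then (1 : ℝ) else 0) * g i
      = ∑ j ∈ Finset.univ.filter (fun j : Fin n => (j : ℕ) < numRej n k p S α x),
          g (sortPerm n k p S x j) := by
  rw [← Equiv.sum_comp (sortPerm n k p S x), Finset.sum_filter]
  simp [oracleRule]

theorem sum_oracleRule :
    ∑ i, (if oracleRule n k p S α x i then (1 : ℝ) else 0) = numRej n k p S α x := by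
  simpa [Fin.card_filter_val_lt, numRej_le] using sum_oracleRule_mul (fun _ => (1 : ℝ))

theorem sum_oracleRule_mul_TOR_le :
    ∑ i, (if oracleRule n k p S α x i then (1 : ℝ) else 0) * TOR n k p S i x
      ≤ α * numRej n k p S α x := by
  rw [sum_oracleRule_mul]
  rcases numRej_eq_zero_or_mem n k p S α x with h | ⟨hpos, -, havg⟩
  · simp [h]
  · have : (0 : ℝ) < numRej n k p S α x := by exact_mod_cast hpos
    rw [one_div, inv_mul_le_iff₀ this] at havg
    linarith

end StepUp

theorem sum_jointDensity_mul_numFalseRej_le {n : ℕ} {k p : ℝ} {S : Matrix (Fin n) (Fin n) ℝ}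
    (hp0 : 0 < p) (hp1 : p < 1) (hS : 0 < S.det) (α : ℝ) (x : Fin n → ℝ) :
    ∑ θ, wBer n p θ * gdens n k S x (bvec θ) *
        ∑ i, (if oracleRule n k p S α x i then (1 : ℝ) else 0) *
          (if θ i = false then (1 : ℝ) else 0)
      ≤ ∑ θ, wBer n p θ * gdens n k S x (bvec θ) *
        (α * ∑ i, (if oracleRule n k p S α x i then (1 : ℝ) else 0)) := by
  set D := ∑ η, wBer n p η * gdens n k S x (bvec η)
  have hD : 0 < D := Finset.sum_pos (fun θ _ => mul_pos (wBer_pos hp0 hp1 θ) (gdens_pos hS x _))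
    Finset.univ_nonempty
  calc _ = ∑ i, (if oracleRule n k p S α x i then (1 : ℝ) else 0) *
          ∑ θ, wBer n p θ * gdens n k S x (bvec θ) * (if θ i = false then (1 : ℝ) else 0) := by
        simp only [Finset.mul_sum]
        rw [Finset.sum_comm]
        exact Finset.sum_congr rfl fun _ _ => Finset.sum_congr rfl fun _ _ => by ring
    _ = (∑ i, (if oracleRule n k p S α x i then (1 : ℝ) else 0) * TOR n k p S i x) * D := by
        rw [Finset.sum_mul]
        refine Finset.sum_congr rfl fun i _ => ?_
        rw [sum_mul_ite_eq_TOR_mul hD.ne' i, mul_assoc]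
    _ ≤ α * numRej n k p S α x * D := by gcongr; exact sum_oracleRule_mul_TOR_le
    _ = _ := by rw [← Finset.sum_mul, sum_oracleRule]; ring

theorem oracle_procedure_controls_mFDR_general {n : ℕ} (k p : ℝ)
    (hp0 : 0 < p) (hp1 : p < 1)
    (S : Matrix (Fin n) (Fin n) ℝ) (hS : S.PosDef)
    (α : ℝ) (hα0 : 0 < α)
    (hpos : 0 < ∫ z, (∑ i, (if oracleRule n k p S α z.2 i then (1 : ℝ) else 0))
      ∂(jointMeasure n k p S)) :
    (∫ z, (∑ i, (if oracleRule n k p S α z.2 i then (1 : ℝ) else 0) *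
          (if z.1 i = false then (1 : ℝ) else 0)) ∂(jointMeasure n k p S)) /
      (∫ z, (∑ i, (if oracleRule n k p S α z.2 i then (1 : ℝ) else 0))
        ∂(jointMeasure n k p S)) ≤ α := by
  have hR : Integrable (fun z : (Fin n → Bool) × (Fin n → ℝ) =>
      ∑ i, (if oracleRule n k p S α z.2 i then (1 : ℝ) else 0)) (jointMeasure n k p S) := by
    by_contra h
    rw [integral_undef h] at hpos
    exact hpos.false
  by_cases hV : Integrable (fun z : (Fin n → Bool) × (Fin n → ℝ) =>
      ∑ i, (if oracleRule n k p S α z.2 i then (1 : ℝ) else 0) *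
        (if z.1 i = false then (1 : ℝ) else 0)) (jointMeasure n k p S)
  · rw [div_le_iff₀ hpos, ← integral_const_mul]
    refine integral_withDensity_count_prod_mono measurable_jointDensity
      (fun z => (mul_pos (wBer_pos hp0 hp1 _) (gdens_pos hS.det_pos _ _)).le) hV
      (hR.const_mul α) fun x => ?_
    exact sum_jointDensity_mul_numFalseRej_le hp0 hp1 hS.det_pos α x
  · rw [integral_undef hV, zero_div]
    exact hα0.le

/-- The oracle procedure controls the mFDR at level `α`:
`E[# rejected i with θ_i = 0] / E[# rejected] ≤ α`, provided the expected number of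
rejections is positive. -/
theorem oracle_procedure_controls_mFDR {n : ℕ} (hn : 1 ≤ n) (k p : ℝ) (hk : k ≠ 0)
    (hp0 : 0 < p) (hp1 : p < 1)
    (S : Matrix (Fin n) (Fin n) ℝ) (hS : S.PosDef)
    (α : ℝ) (hα0 : 0 < α) (hα1 : α < 1)
    (hpos : 0 < ∫ z, (∑ i, (if oracleRule n k p S α z.2 i then (1 : ℝ) else 0))
      ∂(jointMeasure n k p S)) :
    (∫ z, (∑ i, (if oracleRule n k p S α z.2 i then (1 : ℝ) else 0) *
          (if z.1 i = false then (1 : ℝ) else 0)) ∂(jointMeasure n k p S)) /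
      (∫ z, (∑ i, (if oracleRule n k p S α z.2 i then (1 : ℝ) else 0))
        ∂(jointMeasure n k p S)) ≤ α :=
  oracle_procedure_controls_mFDR_general k p hp0 hp1 S hS α hα0 hpos
end
end
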